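/- For the k-Fibonacci sequence, F_{k,n−1}·F_{k,n+4} − F_{k,n}·F_{k,n+3} = (−1)^n·(k³+2k) for all n ≥ 1. -/

import Mathlib

open TensorProduct

noncomputable def kFib (k : ℝ) : ℕ → ℝ
  | 0 => 0
  | 1 => 1
  | n + 2 => k * kFib k (n + 1) + kFib k n

abbrev Bicomplex : Type := ℂ ⊗[ℝ] ℂ

lemma kFib_add_two (k : ℝ) (n : ℕ) : kFib k (n + 2) = k * kFib k (n + 1) + kFib k n := rfl

lemma kFib_four (k : ℝ) : kFib k 4 = k ^ 3 + 2 * k := by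
  simp only [kFib]
  ring

/-- d'Ocagne's identity for the k-Fibonacci numbers. -/
lemma kFib_mul_kFib_sub_kFib_mul_kFib (k : ℝ) (m j : ℕ) :
    kFib k m * kFib k (m + j + 1) - kFib k (m + 1) * kFib k (m + j) =
      (-1 : ℝ) ^ (m + 1) * kFib k j := by
  induction m with
  | zero => simp [kFib]
  | succ m ih =>
    have hstep : kFib k (m + 1) * kFib k (m + 1 + j + 1) - kFib k (m + 1 + 1) * kFib k (m + 1 + j) =
        -(kFib k m * kFib k (m + j + 1) - kFib k (m + 1) * kFib k (m + j)) := by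
      rw [show m + 1 + j + 1 = m + j + 2 by omega, show m + 1 + j = m + j + 1 by omega,
        kFib_add_two, kFib_add_two]
      ring
    rw [hstep, ih]
    ring

theorem stmt7_general (k : ℝ) (n : ℕ) (hn : 1 ≤ n) :
    kFib k (n - 1) * kFib k (n + 4) - kFib k n * kFib k (n + 3) = (-1 : ℝ) ^ n * (k ^ 3 + 2 * k) := by
  obtain ⟨m, rfl⟩ := Nat.exists_eq_add_of_le' hn
  rw [← kFib_four, ← kFib_mul_kFib_sub_kFib_mul_kFib, Nat.add_sub_cancel]

theorem stmt7 (k : ℝ) (hk : 0 < k) (n : ℕ) (hn : 1 ≤ n) :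
    kFib k (n - 1) * kFib k (n + 4) - kFib k n * kFib k (n + 3) = (-1 : ℝ) ^ n * (k ^ 3 + 2 * k) :=
  stmt7_general k n hn
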